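/- arXiv:2506.18356 — 2 statements merged into one kernel-verified Lean document; each statement's English description precedes it below -/
import Mathlib

section
/- Let a ∈ ℝⁿ with a ≥ 0 and let B be an entrywise nonnegative n×n×n tensor. Let m be the minimal nonnegative solution of x = a + Bx², assume R_m = I − Bm: − B:m is invertible with R_m⁻¹ entrywise nonnegative, and set y = R_m⁻¹a. Then y − m = R_m⁻¹(Bm²) ≥ 0; in particular m ≤ y entrywise. -/
open Matrix

/-- `(tapp B x y) i = Σ_{j,k} B i j k * x j * y k`, the tensor–vector–vector product. -/
def tapp {n : ℕ} (B : Fin n → Fin n → Fin n → ℝ) (x y : Fin n → ℝ) : Fin n → ℝ :=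
  fun i => ∑ j, ∑ k, B i j k * x j * y k

/-- The matrix `Bx:`, satisfying `(Bx:) h = B x h`; `(Bx:)_{ij} = Σ_k b_{ikj} x_k`. -/
def matL {n : ℕ} (B : Fin n → Fin n → Fin n → ℝ) (x : Fin n → ℝ) :
    Matrix (Fin n) (Fin n) ℝ :=
  Matrix.of fun i j => ∑ k, B i k j * x k

/-- The matrix `B:x`, satisfying `(B:x) h = B h x`; `(B:x)_{ij} = Σ_k b_{ijk} x_k`. -/
def matR {n : ℕ} (B : Fin n → Fin n → Fin n → ℝ) (x : Fin n → ℝ) :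
    Matrix (Fin n) (Fin n) ℝ :=
  Matrix.of fun i j => ∑ k, B i j k * x k

/-- `R_x = I − Bx: − B:x`, the negative Jacobian of `x ↦ a + Bx² − x`. -/
def Rmat {n : ℕ} (B : Fin n → Fin n → Fin n → ℝ) (x : Fin n → ℝ) :
    Matrix (Fin n) (Fin n) ℝ :=
  1 - matL B x - matR B x

/-! Since `Bm:` and `B:m` both send `m` to `Bm²`, the fixed-point equation gives
`R_m m = m - 2 Bm² = a - Bm²`. Applying `R_m⁻¹` yields `y - m = R_m⁻¹ (Bm²)`, a product of
entrywise nonnegative factors. -/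

theorem Matrix.mulVec_nonneg {ι κ R : Type*} [Fintype κ] [Semiring R] [PartialOrder R]
    [IsOrderedRing R] {M : Matrix ι κ R} (hM : ∀ i j, 0 ≤ M i j) {v : κ → R} (hv : 0 ≤ v) :
    0 ≤ M *ᵥ v :=
  fun i => Finset.sum_nonneg fun j _ => mul_nonneg (hM i j) (hv j)

section Tensor

variable {n : ℕ} (B : Fin n → Fin n → Fin n → ℝ)

theorem tapp_nonneg (hB : ∀ i j k, 0 ≤ B i j k) {x y : Fin n → ℝ} (hx : 0 ≤ x) (hy : 0 ≤ y) :
    0 ≤ tapp B x y :=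
  fun i => Finset.sum_nonneg fun j _ => Finset.sum_nonneg fun k _ =>
    mul_nonneg (mul_nonneg (hB i j k) (hx j)) (hy k)

theorem matL_mulVec (x h : Fin n → ℝ) : matL B x *ᵥ h = tapp B x h := by
  funext i
  simp only [matL, tapp, mulVec, dotProduct, of_apply, Finset.sum_mul]
  rw [Finset.sum_comm]

theorem matR_mulVec (x h : Fin n → ℝ) : matR B x *ᵥ h = tapp B h x := by
  funext i
  simp only [matR, tapp, mulVec, dotProduct, of_apply, Finset.sum_mul]
  exact Finset.sum_congr rfl fun j _ => Finset.sum_congr rfl fun k _ => by ring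

theorem Rmat_mulVec_self (x : Fin n → ℝ) : Rmat B x *ᵥ x = x - tapp B x x - tapp B x x := by
  rw [Rmat, sub_mulVec, sub_mulVec, one_mulVec, matL_mulVec, matR_mulVec]

theorem Rmat_mulVec_of_eq_add_tapp {a m : Fin n → ℝ} (hm : m = a + tapp B m m) :
    Rmat B m *ᵥ m = a - tapp B m m := by
  rw [Rmat_mulVec_self]
  nth_rewrite 1 [hm]
  abel

end Tensor

theorem y_sub_m_eq_and_nonneg_general
    {n : ℕ} (a : Fin n → ℝ) (B : Fin n → Fin n → Fin n → ℝ)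
    (hB : ∀ i j k, 0 ≤ B i j k)
    (m : Fin n → ℝ)
    (hm0 : ∀ i, 0 ≤ m i)
    (hmsol : m = a + tapp B m m)
    (hdet : IsUnit (Rmat B m).det)
    (hinv : ∀ i j, 0 ≤ (Rmat B m)⁻¹ i j)
    (y : Fin n → ℝ) (hy : y = (Rmat B m)⁻¹ *ᵥ a) :
    y - m = (Rmat B m)⁻¹ *ᵥ tapp B m m ∧ ∀ i, m i ≤ y i := by
  have hm : (Rmat B m)⁻¹ *ᵥ (a - tapp B m m) = m := by
    rw [← Rmat_mulVec_of_eq_add_tapp B hmsol, mulVec_mulVec, nonsing_inv_mul _ hdet, one_mulVec]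
  have heq : y - m = (Rmat B m)⁻¹ *ᵥ tapp B m m :=
    calc y - m = (Rmat B m)⁻¹ *ᵥ a - (Rmat B m)⁻¹ *ᵥ (a - tapp B m m) := by rw [hy, hm]
      _ = (Rmat B m)⁻¹ *ᵥ tapp B m m := by rw [← mulVec_sub, sub_sub_cancel]
  have hnonneg : 0 ≤ y - m := heq ▸ mulVec_nonneg hinv (tapp_nonneg B hB hm0 hm0)
  exact ⟨heq, fun i => sub_nonneg.mp (hnonneg i)⟩

/-- For the minimal solution `m` of `x = a + Bx²` and `y = R_m⁻¹ a`, one has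
`y − m = R_m⁻¹ (Bm²) ≥ 0`; in particular `m ≤ y` entrywise. -/
theorem y_sub_m_eq_and_nonneg
    {n : ℕ} (a : Fin n → ℝ) (B : Fin n → Fin n → Fin n → ℝ)
    (ha : ∀ i, 0 ≤ a i) (hB : ∀ i j k, 0 ≤ B i j k)
    (m : Fin n → ℝ)
    (hm0 : ∀ i, 0 ≤ m i)
    (hmsol : m = a + tapp B m m)
    (hmin : ∀ x : Fin n → ℝ, (∀ i, 0 ≤ x i) → x = a + tapp B x x → ∀ i, m i ≤ x i)
    (hdet : IsUnit (Rmat B m).det)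
    (hinv : ∀ i j, 0 ≤ (Rmat B m)⁻¹ i j)
    (y : Fin n → ℝ) (hy : y = (Rmat B m)⁻¹ *ᵥ a) :
    y - m = (Rmat B m)⁻¹ *ᵥ tapp B m m ∧ ∀ i, m i ≤ y i :=
  y_sub_m_eq_and_nonneg_general a B hB m hm0 hmsol hdet hinv y hy
end

section
/- Consider the multilinear PageRank equation x = (1−α)v + αPx² with α ∈ (0,1), v stochastic and P a stochastic n×n×n tensor. Let y_k ∈ ℝⁿ, let R_{y_k} = I − αPy_k: − αP:y_k = M_k − N_k be any splitting with M_k invertible, and let y_{k+1} satisfy M_k y_{k+1} = N_k y_k + (1−α)v − αPy_k². If u_k := 1 − 2α(𝟏ᵀy_k) ≠ 0, then u_{k+1} := 1 − 2α(𝟏ᵀy_{k+1}) satisfies u_{k+1} = (u_k² + (1−2α)² + 4α·𝟏ᵀN_k(y_{k+1} − y_k)) / (2u_k). -/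
/-!
Since every column of the tensor `B = αP` sums to `α`, summing the coordinates of the update
`(R + N) y' = N y + (1 - α) v - B y²` gives `u · 𝟏ᵀy' = (1 - α) - α (𝟏ᵀy)² + 𝟏ᵀN(y - y')`:
the columns of `R = I - By: - B:y` all sum to `u = 1 - 2α 𝟏ᵀy` and `𝟏ᵀ(B y²) = α (𝟏ᵀy)²`.
Multiplying `u' = 1 - 2α 𝟏ᵀy'` by `2u` and substituting leaves a polynomial identity.
-/

open Matrix

lemma sum_mulVec_of_sum_col_eq {m n R : Type*} [Fintype m] [Fintype n] [CommSemiring R]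
    {A : Matrix m n R} {c : R} (hA : ∀ j, ∑ i, A i j = c) (z : n → R) :
    ∑ i, (A *ᵥ z) i = c * ∑ j, z j := by
  simp only [mulVec, dotProduct, Finset.mul_sum]
  rw [Finset.sum_comm]
  exact Finset.sum_congr rfl fun j _ => by rw [← Finset.sum_mul, hA]

section ColumnStochastic

variable {n : ℕ} {B : Fin n → Fin n → Fin n → ℝ} {c : ℝ}

lemma sum_matL_col (hB : ∀ j k, ∑ i, B i j k = c) (x : Fin n → ℝ) (j : Fin n) :
    ∑ i, matL B x i j = c * ∑ k, x k := by
  simp only [matL, of_apply, Finset.mul_sum]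
  rw [Finset.sum_comm]
  exact Finset.sum_congr rfl fun k _ => by rw [← Finset.sum_mul, hB]

lemma sum_matR_col (hB : ∀ j k, ∑ i, B i j k = c) (x : Fin n → ℝ) (j : Fin n) :
    ∑ i, matR B x i j = c * ∑ k, x k := by
  simp only [matR, of_apply, Finset.mul_sum]
  rw [Finset.sum_comm]
  exact Finset.sum_congr rfl fun k _ => by rw [← Finset.sum_mul, hB]

lemma sum_Rmat_col (hB : ∀ j k, ∑ i, B i j k = c) (x : Fin n → ℝ) (j : Fin n) :
    ∑ i, Rmat B x i j = 1 - 2 * c * ∑ k, x k := by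
  simp only [Rmat, Matrix.sub_apply, Finset.sum_sub_distrib, sum_matL_col hB, sum_matR_col hB,
    one_apply, Finset.sum_ite_eq', Finset.mem_univ, if_true]
  ring

lemma sum_tapp (hB : ∀ j k, ∑ i, B i j k = c) (x y : Fin n → ℝ) :
    ∑ i, tapp B x y i = c * (∑ j, x j) * ∑ k, y k := by
  calc ∑ i, tapp B x y i = ∑ j, ∑ k, (∑ i, B i j k) * x j * y k := by
        simp only [tapp, Finset.sum_mul]
        rw [Finset.sum_comm]
        exact Finset.sum_congr rfl fun j _ => Finset.sum_comm
    _ = c * (∑ j, x j) * ∑ k, y k := by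
        rw [mul_assoc, Finset.sum_mul_sum, Finset.mul_sum]
        simp only [hB, mul_assoc, Finset.mul_sum]

lemma sum_splitting_step (hB : ∀ j k, ∑ i, B i j k = c)
    {y y' w : Fin n → ℝ} {M N : Matrix (Fin n) (Fin n) ℝ}
    (hsplit : Rmat B y = M - N) (hstep : M *ᵥ y' = N *ᵥ y + w - tapp B y y) :
    (1 - 2 * c * ∑ i, y i) * ∑ i, y' i
      = ∑ i, w i - c * (∑ i, y i) ^ 2 - ∑ i, (N *ᵥ (y' - y)) i := by
  have hM : M = Rmat B y + N := by rw [hsplit, sub_add_cancel]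
  have hsum := congrArg (fun z : Fin n → ℝ => ∑ i, z i) hstep
  simp only [hM, add_mulVec, mulVec_sub, Pi.add_apply, Pi.sub_apply, Finset.sum_add_distrib,
    Finset.sum_sub_distrib, sum_mulVec_of_sum_col_eq (sum_Rmat_col hB y), sum_tapp hB] at hsum ⊢
  linear_combination hsum

end ColumnStochastic

theorem splitting_triplet_recurrence_general
    {n : ℕ} (α : ℝ)
    (v : Fin n → ℝ) (hv1 : ∑ i, v i = 1)
    (P : Fin n → Fin n → Fin n → ℝ)
    (hP1 : ∀ j k, ∑ i, P i j k = 1)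
    (B : Fin n → Fin n → Fin n → ℝ) (hBdef : B = fun i j k => α * P i j k)
    (y ynext : Fin n → ℝ) (M N : Matrix (Fin n) (Fin n) ℝ)
    (hsplit : Rmat B y = M - N)
    (hupd : M *ᵥ ynext = N *ᵥ y + (fun i => (1 - α) * v i) - tapp B y y)
    (u unext : ℝ)
    (hu : u = 1 - 2 * α * (∑ i, y i)) (hune : u ≠ 0)
    (hunext : unext = 1 - 2 * α * (∑ i, ynext i)) :
    unext = (u ^ 2 + (1 - 2 * α) ^ 2 + 4 * α * (∑ i, (N *ᵥ (ynext - y)) i)) / (2 * u) := by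
  have hB : ∀ j k, ∑ i, B i j k = α := fun j k => by
    rw [hBdef, ← Finset.mul_sum, hP1, mul_one]
  have hstep := sum_splitting_step hB hsplit hupd
  rw [← Finset.mul_sum, hv1, mul_one, ← hu] at hstep
  rw [eq_div_iff (mul_ne_zero two_ne_zero hune), hunext]
  subst hu
  linear_combination (-4 * α) * hstep

/-- Recurrence for the triplet scalars `u_k = 1 − 2α(𝟏ᵀ y_k)` of a splitting-based
(block Jacobi type) iteration for multilinear PageRank. -/
theorem splitting_triplet_recurrence
    {n : ℕ} (α : ℝ) (hα0 : 0 < α) (hα1 : α < 1)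
    (v : Fin n → ℝ) (hv0 : ∀ i, 0 ≤ v i) (hv1 : ∑ i, v i = 1)
    (P : Fin n → Fin n → Fin n → ℝ)
    (hP0 : ∀ i j k, 0 ≤ P i j k) (hP1 : ∀ j k, ∑ i, P i j k = 1)
    (B : Fin n → Fin n → Fin n → ℝ) (hBdef : B = fun i j k => α * P i j k)
    (y ynext : Fin n → ℝ) (M N : Matrix (Fin n) (Fin n) ℝ)
    (hsplit : Rmat B y = M - N)
    (hMdet : IsUnit M.det)
    (hupd : M *ᵥ ynext = N *ᵥ y + (fun i => (1 - α) * v i) - tapp B y y)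
    (u unext : ℝ)
    (hu : u = 1 - 2 * α * (∑ i, y i)) (hune : u ≠ 0)
    (hunext : unext = 1 - 2 * α * (∑ i, ynext i)) :
    unext = (u ^ 2 + (1 - 2 * α) ^ 2 + 4 * α * (∑ i, (N *ᵥ (ynext - y)) i)) / (2 * u) :=
  splitting_triplet_recurrence_general α v hv1 P hP1 B hBdef y ynext M N hsplit hupd u unext hu hune
    hunext
end
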